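/- arXiv:1610.09266 — 2 statements merged into one kernel-verified Lean document; each statement's English description precedes it below -/
import Mathlib

section
/- Let r ≥ 1, n+1 = 2^r, and let α_1,…,α_{n+1} be an enumeration of all sign vectors in {−1,1}^r ⊂ ℝ^r. Then the image of the unit sphere of ℂ^{n+1} under the map z ↦ (1/2) Σ_{j=1}^{n+1} |z_j|² α_j is exactly the hypercube {x ∈ ℝ^r : |x_i| ≤ 1/2 for every i}. In other words, the image of the moment map μ_T of the Hamiltonian T^r-action on ℙ_n is the full hypercube Δ. -/
/-!
The squared moduli of a unit vector of `ℂ^{n+1}` range over exactly the standard simplex, so the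
image of the moment map is half the convex hull of the sign vectors. That hull is the product of
the segments `[-1, 1]`, because taking convex hulls commutes with products.
-/

open Set

theorem convexHull_range_eq_image_stdSimplex {𝕜 ι E : Type*} [Field 𝕜] [LinearOrder 𝕜]
    [IsStrictOrderedRing 𝕜] [Fintype ι] [AddCommGroup E] [Module 𝕜 E] (v : ι → E) :
    convexHull 𝕜 (range v) = Fintype.linearCombination 𝕜 v '' stdSimplex 𝕜 ι := by
  classical
  have hbasis : Fintype.linearCombination 𝕜 v ∘ (fun i => Pi.single i 1) = v :=
    funext fun i => by simp
  rw [← convexHull_rangle_single_eq_stdSimplex, LinearMap.image_convexHull, ← range_comp, hbasis]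

theorem convexHull_signVectors_eq_cube {ι : Type*} [Finite ι] :
    convexHull ℝ {v : ι → ℝ | ∀ i, v i = 1 ∨ v i = -1} = {x | ∀ i, |x i| ≤ 1} := by
  have hsigns : {v : ι → ℝ | ∀ i, v i = 1 ∨ v i = -1} = univ.pi fun _ => {-1, 1} := by
    ext v
    simp [or_comm]
  ext x
  simp [hsigns, convexHull_pair, segment_eq_Icc, abs_le, Pi.le_def, forall_and]

theorem RCLike.exists_norm_sq_eq {𝕜 ι : Type*} [RCLike 𝕜] (w : ι → ℝ) (hw : ∀ i, 0 ≤ w i) :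
    ∃ z : ι → 𝕜, ∀ i, ‖z i‖ ^ 2 = w i :=
  ⟨fun i => (√(w i) : 𝕜), fun i => by simp [hw i]⟩

theorem exists_sphere_moment_eq_iff_mem_convexHull {ι κ : Type*} [Fintype ι]
    (α : ι → κ → ℝ) (x : κ → ℝ) :
    (∃ z : ι → ℂ, ∑ j, ‖z j‖ ^ 2 = 1 ∧ ∀ i, x i = 1/2 * ∑ j, ‖z j‖ ^ 2 * α j i) ↔
      (2 : ℝ) • x ∈ convexHull ℝ (range α) := by
  have hx : ∀ w : ι → ℝ, (∀ i, x i = 1/2 * ∑ j, w j * α j i) ↔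
      Fintype.linearCombination ℝ α w = (2 : ℝ) • x := by
    intro w
    simp only [funext_iff, Fintype.linearCombination_apply, Finset.sum_apply, Pi.smul_apply,
      smul_eq_mul]
    refine forall_congr' fun i => ?_
    constructor <;> intro h <;> linarith
  rw [convexHull_range_eq_image_stdSimplex]
  constructor
  · rintro ⟨z, hz, hxz⟩
    exact ⟨fun j => ‖z j‖ ^ 2, ⟨fun j => by positivity, hz⟩, (hx _).1 hxz⟩
  · rintro ⟨w, ⟨hw₀, hw₁⟩, hwx⟩
    obtain ⟨z, hz⟩ := RCLike.exists_norm_sq_eq (𝕜 := ℂ) w hw₀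
    refine ⟨z, ?_, ?_⟩ <;> simp only [hz]
    exacts [hw₁, (hx w).2 hwx]

theorem moment_map_image_eq_hypercube_general (r n : ℕ)
    (α : Fin (n + 1) → (Fin r → ℝ))
    (hrange : Set.range α = {v : Fin r → ℝ | ∀ i, v i = 1 ∨ v i = -1}) :
    {x : Fin r → ℝ | ∃ z : Fin (n + 1) → ℂ, (∑ j, ‖z j‖ ^ 2) = 1 ∧
        ∀ i, x i = (1/2) * ∑ j, ‖z j‖ ^ 2 * α j i} =
      {x : Fin r → ℝ | ∀ i, |x i| ≤ 1/2} := by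
  ext x
  rw [mem_ofPred_eq, exists_sphere_moment_eq_iff_mem_convexHull, hrange,
    convexHull_signVectors_eq_cube]
  refine forall_congr' fun i => ?_
  rw [Pi.smul_apply, smul_eq_mul, abs_mul, abs_two]
  constructor <;> intro h <;> linarith

/-- Let `n+1 = 2^r` and let `α_1, …, α_{n+1}` enumerate all sign vectors in `{-1,1}^r ⊆ ℝ^r`.
The image of the unit sphere of `ℂ^{n+1}` under `z ↦ (1/2) ∑_j |z_j|² α_j` is exactly the
hypercube `{x ∈ ℝ^r : |x i| ≤ 1/2}`, i.e. the image of the moment map `μ_T` of the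
Hamiltonian `T^r`-action on `ℙ_n` is the full hypercube Δ. -/
theorem moment_map_image_eq_hypercube (r n : ℕ) (hr : 1 ≤ r) (hn : n + 1 = 2 ^ r)
    (α : Fin (n + 1) → (Fin r → ℝ)) (hinj : Function.Injective α)
    (hrange : Set.range α = {v : Fin r → ℝ | ∀ i, v i = 1 ∨ v i = -1}) :
    {x : Fin r → ℝ | ∃ z : Fin (n + 1) → ℂ, (∑ j, ‖z j‖ ^ 2) = 1 ∧
        ∀ i, x i = (1/2) * ∑ j, ‖z j‖ ^ 2 * α j i} =
      {x : Fin r → ℝ | ∀ i, |x i| ≤ 1/2} :=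
  moment_map_image_eq_hypercube_general r n α hrange
end

section
/- In the polynomial ring ℂ[θ_1,θ_2,θ_3,ω], let χ_1,…,χ_8 be the eight linear forms ±θ_1±θ_2±θ_3 (all sign combinations). Then σ_1(χ•) ω⁷ + σ_3(χ•) ω⁵ + σ_4(χ•) ω⁴ + σ_7(χ•) ω = 2 ( 3σ_1(θ)⁴ − 12 σ_2(θ) σ_1(θ)² + 8 σ_3(θ) σ_1(θ) + 8 σ_2(θ)² ) ω⁴; equivalently (since the odd elementary symmetric polynomials of χ_1,…,χ_8 vanish), σ_4(χ•) = 2(3σ_1⁴ − 12σ_1²σ_2 + 8σ_1σ_3 + 8σ_2²). (This is the generator Q̃^S_{+,3} of the kernel ideal for the three-qubit case r = 3.) -/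
/-!
The eight characters come in pairs `±χ`, so the multiset `χs` is invariant under negation.
Since `σ_k(-x•) = (-1)^k σ_k(x•)` and the coefficient ring has no `2`-torsion, every odd
`σ_k(χ•)` vanishes, and both identities reduce to the value of `σ_4(χ•)`, which is a direct
expansion.
-/

open MvPolynomial

/-- `θ_1` in `ℂ[θ_1,θ_2,θ_3,ω]`. -/
noncomputable def θ₁ : MvPolynomial (Fin 4) ℂ := X 0
/-- `θ_2` in `ℂ[θ_1,θ_2,θ_3,ω]`. -/
noncomputable def θ₂ : MvPolynomial (Fin 4) ℂ := X 1
/-- `θ_3` in `ℂ[θ_1,θ_2,θ_3,ω]`. -/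
noncomputable def θ₃ : MvPolynomial (Fin 4) ℂ := X 2
/-- `ω` in `ℂ[θ_1,θ_2,θ_3,ω]`. -/
noncomputable def w : MvPolynomial (Fin 4) ℂ := X 3

/-- The multiset of the eight linear forms `±θ_1 ± θ_2 ± θ_3` (all sign combinations),
the additive characters of the `T³`-action on `ℙ_7`. -/
noncomputable def χs : Multiset (MvPolynomial (Fin 4) ℂ) :=
  {θ₁ + θ₂ + θ₃, θ₁ + θ₂ - θ₃, θ₁ - θ₂ + θ₃, -θ₁ + θ₂ + θ₃,
   θ₁ - θ₂ - θ₃, -θ₁ + θ₂ - θ₃, -θ₁ - θ₂ + θ₃, -θ₁ - θ₂ - θ₃}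

/-- `σ_1(θ) = θ_1 + θ_2 + θ_3`. -/
noncomputable def s₁ : MvPolynomial (Fin 4) ℂ := θ₁ + θ₂ + θ₃
/-- `σ_2(θ) = θ_1θ_2 + θ_1θ_3 + θ_2θ_3`. -/
noncomputable def s₂ : MvPolynomial (Fin 4) ℂ := θ₁ * θ₂ + θ₁ * θ₃ + θ₂ * θ₃
/-- `σ_3(θ) = θ_1θ_2θ_3`. -/
noncomputable def s₃ : MvPolynomial (Fin 4) ℂ := θ₁ * θ₂ * θ₃

namespace Multiset

variable {R : Type*}

theorem esymm_zero [CommSemiring R] (s : Multiset R) : s.esymm 0 = 1 := by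
  simp [esymm, powersetCard_zero_left]

theorem zero_esymm_succ [CommSemiring R] (k : ℕ) : (0 : Multiset R).esymm (k + 1) = 0 := by
  simp [esymm, powersetCard_zero_right]

theorem esymm_cons_succ [CommSemiring R] (a : R) (s : Multiset R) (k : ℕ) :
    (a ::ₘ s).esymm (k + 1) = s.esymm (k + 1) + a * s.esymm k := by
  simp [esymm, powersetCard_cons, map_map, sum_map_mul_left]

theorem esymm_eq_zero_of_map_neg_eq [CommRing R] [IsAddTorsionFree R] {s : Multiset R}
    (hs : s.map Neg.neg = s) {k : ℕ} (hk : Odd k) : s.esymm k = 0 := by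
  have := esymm_neg s k
  rwa [hs, hk.neg_one_pow, neg_one_mul, self_eq_neg] at this

end Multiset

theorem χs_map_neg : χs.map Neg.neg = χs := by
  have hlist : χs = ↑[θ₁ + θ₂ + θ₃, θ₁ + θ₂ - θ₃, θ₁ - θ₂ + θ₃, -θ₁ + θ₂ + θ₃,
      θ₁ - θ₂ - θ₃, -θ₁ + θ₂ - θ₃, -θ₁ - θ₂ + θ₃, -θ₁ - θ₂ - θ₃] := rfl
  -- `χ₉₋ᵢ = -χᵢ`, so negation reverses the list
  rw [hlist, Multiset.map_coe, ← Multiset.coe_reverse]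
  congr 1
  simp only [List.map_cons, List.map_nil, List.reverse_cons, List.reverse_nil, List.nil_append,
    List.cons_append, List.cons.injEq, and_true]
  refine ⟨?_, ?_, ?_, ?_, ?_, ?_, ?_, ?_⟩ <;> ring

theorem χs_esymm_four :
    χs.esymm 4 = 2 * (3 * s₁ ^ 4 - 12 * s₁ ^ 2 * s₂ + 8 * s₁ * s₃ + 8 * s₂ ^ 2) := by
  simp only [χs, s₁, s₂, s₃, Multiset.insert_eq_cons, ← Multiset.cons_zero,
    Multiset.esymm_cons_succ, Multiset.esymm_zero, Multiset.zero_esymm_succ]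
  ring

/-- Three-qubit kernel generator `Q̃^S_{+,3}`:
`σ_1(χ•) ω⁷ + σ_3(χ•) ω⁵ + σ_4(χ•) ω⁴ + σ_7(χ•) ω
  = 2 (3σ_1⁴ - 12 σ_2 σ_1² + 8 σ_3 σ_1 + 8 σ_2²) ω⁴`;
equivalently `σ_4(χ•) = 2(3σ_1⁴ - 12σ_1²σ_2 + 8σ_1σ_3 + 8σ_2²)`. -/
theorem three_qubit_kernel_generator_plus_three :
    (χs.esymm 1 * w ^ 7 + χs.esymm 3 * w ^ 5 + χs.esymm 4 * w ^ 4 + χs.esymm 7 * w =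
      2 * (3 * s₁ ^ 4 - 12 * s₂ * s₁ ^ 2 + 8 * s₃ * s₁ + 8 * s₂ ^ 2) * w ^ 4) ∧
    χs.esymm 4 = 2 * (3 * s₁ ^ 4 - 12 * s₁ ^ 2 * s₂ + 8 * s₁ * s₃ + 8 * s₂ ^ 2) := by
  have hodd : ∀ k, Odd k → χs.esymm k = 0 := fun _ hk ↦
    Multiset.esymm_eq_zero_of_map_neg_eq χs_map_neg hk
  refine ⟨?_, χs_esymm_four⟩
  rw [hodd 1 ⟨0, rfl⟩, hodd 3 ⟨1, rfl⟩, hodd 7 ⟨3, rfl⟩, χs_esymm_four]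
  ring
end
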